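/- arXiv:2008.03318 — 6 statements merged into one kernel-verified Lean document; each statement's English description precedes it below -/
import Mathlib

section
/- Let T be a finite tree with Hermitian edge weights (a_{uv} = conj(a_{vu}), all nonzero on edges) and real vertex potential b, and let A_T be the associated Jacobi matrix acting by (A_T η)(u) = b_u η(u) + Σ_{v ~ u} a_{uv} η(v). If λ ∈ ℝ and there exists η ∈ Ker(λ - A_T) with η(v) ≠ 0 for every vertex v of T, then dim Ker(λ - A_T) = 1. -/
/-!
Divide an arbitrary eigenvector `ξ` by the nowhere-vanishing one `η`: the quotient `f = ξ / η`
satisfies `∑ₓ A u x η x (f x - f u) = 0` at every vertex, i.e. it is harmonic for a weighted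
Laplacian whose weights are nonzero exactly on the edges. On a tree such a function is constant:
at a vertex where `f` agrees with all neighbours but one, the harmonic equation forces agreement
with that last neighbour too, and peeling the branches of the tree leaf-first reaches every edge.
-/

open Matrix

def IsWeightedHarmonic {V R : Type*} [Fintype V] [Ring R] (w : V → V → R) (f : V → R) : Prop :=
  ∀ u, ∑ x, w u x * (f x - f u) = 0

theorem Matrix.isWeightedHarmonic_div_of_mulVec_eq_smul {n K : Type*} [Fintype n] [Field K]
    (A : Matrix n n K) {c : K} {η ξ : n → K} (hη : A *ᵥ η = c • η) (hξ : A *ᵥ ξ = c • ξ)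
    (hη₀ : ∀ x, η x ≠ 0) : IsWeightedHarmonic (fun u x => A u x * η x) (fun x => ξ x / η x) := by
  intro u
  have hηu := congrFun hη u
  have hξu := congrFun hξ u
  simp only [Matrix.mulVec, dotProduct, Pi.smul_apply, smul_eq_mul] at hηu hξu
  calc ∑ x, A u x * η x * (ξ x / η x - ξ u / η u)
      = ∑ x, A u x * ξ x - (∑ x, A u x * η x) * (ξ u / η u) := by
        rw [Finset.sum_mul, ← Finset.sum_sub_distrib]
        refine Finset.sum_congr rfl fun x _ => ?_
        field_simp [hη₀ x]
    _ = 0 := by rw [hξu, hηu]; field_simp [hη₀ u]; ring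

namespace SimpleGraph

variable {V : Type*} {G : SimpleGraph V}

def branch (G : SimpleGraph V) (u v : V) : Set V :=
  {x | (G.deleteEdges {s(u, v)}).Reachable x u}

theorem IsAcyclic.branch_ssubset (hG : G.IsAcyclic) {u v w : V} (huw : G.Adj u w) (hwv : w ≠ v) :
    G.branch w u ⊂ G.branch u v := by
  classical
  have hwu : ¬ (G.deleteEdges {s(w, u)}).Reachable w u :=
    isAcyclic_iff_forall_adj_isBridge.mp hG huw.symm
  refine ⟨fun x ⟨p⟩ => ?_, fun h => hwu (h (Reachable.refl u)).symm⟩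
  by_cases hu : u ∈ p.support
  · exact absurd (p.dropUntil u hu).reachable.symm hwu
  refine reachable_deleteEdges_iff_exists_walk.mpr
    ⟨(p.map (Hom.ofLE (deleteEdges_le _))).concat huw.symm, fun h => ?_⟩
  rw [Walk.edges_concat, List.concat_eq_append, List.mem_append, List.mem_singleton] at h
  rcases h with h | h
  · exact hu (by simpa using Walk.fst_mem_support_of_mem_edges _ h)
  · rcases Sym2.eq_iff.mp h with ⟨rfl, -⟩ | ⟨-, hvw⟩
    · exact huw.ne rfl
    · exact hwv hvw.symm

variable [Fintype V] {R : Type*} [Ring R] [NoZeroDivisors R] {w : V → V → R} {f : V → R}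

theorem eq_of_isWeightedHarmonic_of_forall_adj_ne_eq (hf : IsWeightedHarmonic w f) {u v : V}
    (hw₀ : ∀ x, x ≠ u → ¬ G.Adj u x → w u x = 0) (hwv : w u v ≠ 0)
    (heq : ∀ x, G.Adj u x → x ≠ v → f x = f u) : f v = f u := by
  have hfu := hf u
  rw [Finset.sum_eq_single v] at hfu
  · exact sub_eq_zero.mp ((mul_eq_zero.mp hfu).resolve_left hwv)
  · intro x _ hxv
    by_cases hxu : x = u
    · rw [hxu, sub_self, mul_zero]
    by_cases hux : G.Adj u x
    · rw [heq x hux hxv, sub_self, mul_zero]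
    · rw [hw₀ x hxu hux, zero_mul]
  · exact fun hv => absurd (Finset.mem_univ v) hv

theorem IsAcyclic.eq_of_adj_of_isWeightedHarmonic (hG : G.IsAcyclic)
    (hw₀ : ∀ u v, u ≠ v → ¬ G.Adj u v → w u v = 0) (hw : ∀ u v, G.Adj u v → w u v ≠ 0)
    (hf : IsWeightedHarmonic w f) {u v : V} (huv : G.Adj u v) : f u = f v := by
  suffices ∀ s : Set V, ∀ u v, G.Adj u v → G.branch u v = s → f u = f v from this _ u v huv rfl
  intro s
  induction s using WellFoundedLT.induction with
  | _ s ih =>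
    rintro u v huv rfl
    refine (eq_of_isWeightedHarmonic_of_forall_adj_ne_eq hf (fun x hxu => hw₀ u x hxu.symm)
      (hw u v huv) fun x hux hxv => ?_).symm
    exact ih _ (hG.branch_ssubset hux hxv) x u hux.symm rfl

theorem IsTree.eq_of_isWeightedHarmonic (hG : G.IsTree)
    (hw₀ : ∀ u v, u ≠ v → ¬ G.Adj u v → w u v = 0) (hw : ∀ u v, G.Adj u v → w u v ≠ 0)
    (hf : IsWeightedHarmonic w f) (u v : V) : f u = f v := by
  obtain ⟨p⟩ := hG.connected u v
  induction p with
  | nil => rfl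
  | cons h _ ih => exact (hG.isAcyclic.eq_of_adj_of_isWeightedHarmonic hw₀ hw hf h).trans ih

end SimpleGraph

theorem stmt_0_general {V : Type*} [Fintype V] [DecidableEq V] (G : SimpleGraph V)
    (hT : G.IsTree) (A : Matrix V V ℂ)
    (hsupp : ∀ u v : V, u ≠ v → ¬ G.Adj u v → A u v = 0)
    (hnz : ∀ u v : V, G.Adj u v → A u v ≠ 0)
    (lam : ℝ) (η : V → ℂ) (hη : A.mulVec η = (lam : ℂ) • η)
    (hηnz : ∀ v : V, η v ≠ 0) :
    Module.finrank ℂ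
      ↥(LinearMap.ker
        ((lam : ℂ) • (LinearMap.id : (V → ℂ) →ₗ[ℂ] (V → ℂ)) - Matrix.toLin' A)) = 1 := by
  have mem_ker {ξ : V → ℂ} :
      ξ ∈ LinearMap.ker ((lam : ℂ) • LinearMap.id - Matrix.toLin' A) ↔ A *ᵥ ξ = (lam : ℂ) • ξ := by
    rw [LinearMap.mem_ker, LinearMap.sub_apply, LinearMap.smul_apply, LinearMap.id_apply,
      Matrix.toLin'_apply, sub_eq_zero, eq_comm]
  obtain ⟨r⟩ := hT.connected.nonempty
  suffices LinearMap.ker ((lam : ℂ) • LinearMap.id - Matrix.toLin' A) = ℂ ∙ η by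
    rw [this]
    exact finrank_span_singleton fun h => hηnz r (congrFun h r)
  refine le_antisymm (fun ξ hξ => ?_) ((Submodule.span_singleton_le_iff_mem _ _).mpr
    (mem_ker.mpr hη))
  have hconst := hT.eq_of_isWeightedHarmonic
    (fun u x hux hadj => by rw [hsupp u x hux hadj, zero_mul])
    (fun u x hadj => mul_ne_zero (hnz u x hadj) (hηnz x))
    (A.isWeightedHarmonic_div_of_mulVec_eq_smul hη (mem_ker.mp hξ) hηnz)
  refine Submodule.mem_span_singleton.mpr ⟨ξ r / η r, funext fun u => ?_⟩
  rw [Pi.smul_apply, smul_eq_mul, ← hconst u r, div_mul_cancel₀ _ (hηnz u)]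

/-- If a finite tree with Hermitian edge weights (nonzero on edges) and real
potential has a nowhere-vanishing eigenvector for the eigenvalue `lam`, then the
corresponding eigenspace is one-dimensional. -/
theorem stmt_0 {V : Type*} [Fintype V] [DecidableEq V] (G : SimpleGraph V)
    (hT : G.IsTree) (A : Matrix V V ℂ) (hHerm : A.IsHermitian)
    (hsupp : ∀ u v : V, u ≠ v → ¬ G.Adj u v → A u v = 0)
    (hnz : ∀ u v : V, G.Adj u v → A u v ≠ 0)
    (lam : ℝ) (η : V → ℂ) (hη : A.mulVec η = (lam : ℂ) • η)
    (hηnz : ∀ v : V, η v ≠ 0) :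
    Module.finrank ℂ
      ↥(LinearMap.ker
        ((lam : ℂ) • (LinearMap.id : (V → ℂ) →ₗ[ℂ] (V → ℂ)) - Matrix.toLin' A)) = 1 :=
  stmt_0_general G hT A hsupp hnz lam η hη hηnz
end

section
/- Let T be a finite tree with real edge weights a and real potential b, let λ be an eigenvalue of the Jacobi matrix A_T, and let U : E → U(n) assign to each directed edge e a unitary n×n matrix with U_{ě} = U_e^*. Then λ is an eigenvalue of the unitary-weighted Jacobi operator A_{T,U} on ℂ^V ⊗ ℂ^n, defined by (A_{T,U}η)(v) = b_v η(v) + Σ_{e : τ(e)=v} a_e U_e η(σ(e)), with multiplicity at least n. -/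
open scoped Matrix

namespace Stmt1Aux

variable {V : Type*} {G : SimpleGraph V} {n : ℕ}

/-- Product of the edge unitaries along a walk, applied "last edge first":
for a walk `u = x₀ — x₁ — ⋯ — x_k = v`, this is `U x_k x_{k-1} * ⋯ * U x₁ x₀`. -/
noncomputable def wprod (U : V → V → Matrix (Fin n) (Fin n) ℂ) :
    {u v : V} → G.Walk u v → Matrix (Fin n) (Fin n) ℂ
  | _, _, SimpleGraph.Walk.nil => 1
  | u, _, SimpleGraph.Walk.cons (v := w) _ p => wprod U p * U w u

lemma wprod_append (U : V → V → Matrix (Fin n) (Fin n) ℂ) {u v w : V}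
    (p : G.Walk u v) (q : G.Walk v w) :
    wprod U (p.append q) = wprod U q * wprod U p := by
  induction p with
  | nil => simp [wprod]
  | cons h p ih => simp [wprod, ih, mul_assoc]

lemma wprod_concat (U : V → V → Matrix (Fin n) (Fin n) ℂ) {u v w : V}
    (p : G.Walk u v) (h : G.Adj v w) :
    wprod U (p.concat h) = U w v * wprod U p := by
  rw [SimpleGraph.Walk.concat_eq_append, wprod_append]
  simp [wprod]

lemma wprod_unitary {U : V → V → Matrix (Fin n) (Fin n) ℂ}
    (hUuni : ∀ u v : V, G.Adj u v → U u v ∈ Matrix.unitaryGroup (Fin n) ℂ)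
    (hUsym : ∀ u v : V, U v u = (U u v)ᴴ) {u v : V} (p : G.Walk u v) :
    wprod U p ∈ Matrix.unitaryGroup (Fin n) ℂ := by
  induction p with
  | nil => exact one_mem _
  | @cons x y z h p ih =>
      refine mul_mem ih ?_
      rw [hUsym x y]
      exact Unitary.star_mem (hUuni x y h)

/-- The gauge relation: for adjacent `u v`, `U v u * W u = W v` where `W` is the
walk-product along the unique path from a fixed root. -/
lemma gauge [DecidableEq V] (hT : G.IsTree) {U : V → V → Matrix (Fin n) (Fin n) ℂ}
    (hUuni : ∀ u v : V, G.Adj u v → U u v ∈ Matrix.unitaryGroup (Fin n) ℂ)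
    (hUsym : ∀ u v : V, U v u = (U u v)ᴴ) (r : V)
    (P : ∀ v : V, G.Walk r v) (hP : ∀ v, (P v).IsPath)
    (hPu : ∀ v (q : G.Walk r v), q.IsPath → q = P v)
    {u v : V} (h : G.Adj u v) :
    U v u * wprod U (P u) = wprod U (P v) := by
  by_cases hv : v ∈ (P u).support
  · -- `v` lies on the path to `u`; then it is the penultimate vertex.
    have htake : (P u).takeUntil v hv = P v :=
      hPu v _ ((hP u).takeUntil hv)
    have hdrop : (P u).dropUntil v hv = SimpleGraph.Walk.cons h.symm SimpleGraph.Walk.nil := by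
      rcases hT.existsUnique_path v u with ⟨q, -, huniq⟩
      have h1 := huniq _ ((hP u).dropUntil hv)
      have h2 := huniq (SimpleGraph.Walk.cons h.symm SimpleGraph.Walk.nil) (by
        simp [SimpleGraph.Walk.cons_isPath_iff, SimpleGraph.Walk.IsPath.nil, h.ne'])
      rw [h1, h2]
    have hsplit : wprod U (P u) = U u v * wprod U (P v) := by
      conv_lhs => rw [← SimpleGraph.Walk.take_spec (P u) hv]
      rw [wprod_append, hdrop, htake]
      simp [wprod]
    rw [hsplit, hUsym u v, ← mul_assoc, ← Matrix.star_eq_conjTranspose,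
      (Matrix.mem_unitaryGroup_iff'.mp (hUuni u v h)), one_mul]
  · -- `v` is not on the path to `u`; extend the path by the edge `u → v`.
    have hpath : ((P u).concat h).IsPath := by
      rw [← SimpleGraph.Walk.isPath_reverse_iff, SimpleGraph.Walk.reverse_concat]
      exact (hP u).reverse.cons
        (by simpa [SimpleGraph.Walk.support_reverse] using hv)
    rw [← hPu v _ hpath, wprod_concat]

end Stmt1Aux

open scoped Matrix
/-- If `lam` is an eigenvalue of the Jacobi matrix of a finite tree with real
symmetric edge weights `a` and potential `b`, then the unitary-weighted Jacobi operator
(twisting each edge by a unitary `U u v ∈ U(n)` with `U v u = (U u v)ᴴ`) has `lam` as an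
eigenvalue with multiplicity at least `n`. -/
theorem stmt_1 {V : Type*} [Fintype V] [DecidableEq V] (G : SimpleGraph V)
    (hT : G.IsTree) (n : ℕ)
    (a : V → V → ℝ) (hasym : ∀ u v : V, a u v = a v u)
    (hasupp : ∀ u v : V, ¬ G.Adj u v → a u v = 0)
    (b : V → ℝ) (lam : ℝ)
    (A : Matrix V V ℝ)
    (hA : ∀ u v : V, A u v = if u = v then b u else a u v)
    (hlam : ∃ η : V → ℝ, η ≠ 0 ∧ A.mulVec η = lam • η)
    (U : V → V → Matrix (Fin n) (Fin n) ℂ)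
    (hUuni : ∀ u v : V, G.Adj u v → U u v ∈ Matrix.unitaryGroup (Fin n) ℂ)
    (hUsym : ∀ u v : V, U v u = (U u v)ᴴ)
    (B : Matrix (V × Fin n) (V × Fin n) ℂ)
    (hB : ∀ p q : V × Fin n, B p q =
      if p.1 = q.1 then (if p.2 = q.2 then (b p.1 : ℂ) else 0)
      else (a p.1 q.1 : ℂ) * U p.1 q.1 p.2 q.2) :
    n ≤ Module.finrank ℂ
      ↥(LinearMap.ker
        ((lam : ℂ) • (LinearMap.id : (V × Fin n → ℂ) →ₗ[ℂ] (V × Fin n → ℂ)) -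
          Matrix.toLin' B)) := by
  classical
  obtain ⟨η, hη0, hηeig⟩ := hlam
  obtain ⟨v0, hv0⟩ : ∃ v, η v ≠ 0 := Function.ne_iff.mp hη0
  -- unique paths from the root `v0`
  have hup := fun v => hT.existsUnique_path v0 v
  set P : ∀ v : V, G.Walk v0 v := fun v => (hup v).choose with hPdef
  have hP : ∀ v, (P v).IsPath := fun v => (hup v).choose_spec.1
  have hPu : ∀ v (q : G.Walk v0 v), q.IsPath → q = P v :=
    fun v q hq => (hup v).choose_spec.2 q hq
  set W : V → Matrix (Fin n) (Fin n) ℂ := fun v => Stmt1Aux.wprod U (P v) with hWdef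
  have hWuni : ∀ v, W v ∈ Matrix.unitaryGroup (Fin n) ℂ :=
    fun v => Stmt1Aux.wprod_unitary hUuni hUsym (P v)
  have hgauge : ∀ {u v : V}, G.Adj u v → U v u * W u = W v :=
    fun {u v} h => Stmt1Aux.gauge hT hUuni hUsym v0 P hP hPu h
  -- complexified eigen-equation
  have heig : ∀ v : V, (∑ u, (A v u : ℂ) * (η u : ℂ)) = (lam : ℂ) * (η v : ℂ) := by
    intro v
    have h1 : ∑ u, A v u * η u = lam * η v := by
      simpa [Matrix.mulVec, dotProduct] using congrFun hηeig v
    calc (∑ u, ((A v u : ℂ) * (η u : ℂ))) = ((∑ u, A v u * η u : ℝ) : ℂ) := by push_cast; rfl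
    _ = (lam : ℂ) * (η v : ℂ) := by rw [h1]; push_cast; rfl
  -- the intertwining linear map
  set L : (Fin n → ℂ) →ₗ[ℂ] (V × Fin n → ℂ) :=
    { toFun := fun x p => (η p.1 : ℂ) * (W p.1 *ᵥ x) p.2
      map_add' := by
        intro x y; funext p
        simp [Matrix.mulVec_add, mul_add]
      map_smul' := by
        intro c x; funext p
        simp [Matrix.mulVec_smul, smul_eq_mul]; ring } with hLdef
  have hLapply : ∀ x p, L x p = (η p.1 : ℂ) * (W p.1 *ᵥ x) p.2 := fun x p => rfl
  -- intertwining relation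
  have key : ∀ x, Matrix.toLin' B (L x) = (lam : ℂ) • L x := by
    intro x
    funext p
    obtain ⟨v, i⟩ := p
    have per_u : ∀ u : V,
        (∑ j, B (v, i) (u, j) * ((η u : ℂ) * (W u *ᵥ x) j))
          = (A v u : ℂ) * (η u : ℂ) * (W v *ᵥ x) i := by
      intro u
      by_cases huv : v = u
      · subst huv
        have : ∀ j, B (v, i) (v, j) * ((η v : ℂ) * (W v *ᵥ x) j)
            = if i = j then (b v : ℂ) * ((η v : ℂ) * (W v *ᵥ x) j) else 0 := by
          intro j; rw [hB]; simp [ite_mul]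
        rw [Finset.sum_congr rfl (fun j _ => this j), Finset.sum_ite_eq]
        simp [hA]; ring
      · have hBe : ∀ j, B (v, i) (u, j) = (a v u : ℂ) * U v u i j := by
          intro j; rw [hB]; simp [huv]
        have hsum : (∑ j, B (v, i) (u, j) * ((η u : ℂ) * (W u *ᵥ x) j))
            = (a v u : ℂ) * (η u : ℂ) * ((U v u * W u) *ᵥ x) i := by
          calc (∑ j, B (v, i) (u, j) * ((η u : ℂ) * (W u *ᵥ x) j))
              = ∑ j, (a v u : ℂ) * (η u : ℂ) * (U v u i j * (W u *ᵥ x) j) :=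
                Finset.sum_congr rfl fun j _ => by rw [hBe j]; ring
            _ = (a v u : ℂ) * (η u : ℂ) * ∑ j, U v u i j * (W u *ᵥ x) j :=
                (Finset.mul_sum _ _ _).symm
            _ = (a v u : ℂ) * (η u : ℂ) * ((U v u * W u) *ᵥ x) i := by
                rw [← Matrix.mulVec_mulVec]
                simp [Matrix.mulVec, dotProduct]
        rw [hsum]
        by_cases hadj : G.Adj v u
        · rw [hgauge hadj.symm, hA]
          simp [huv]
        · rw [hasupp v u hadj, hA]
          simp [huv, hasupp v u hadj]
    calc Matrix.toLin' B (L x) (v, i)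
        = ∑ u, ∑ j, B (v, i) (u, j) * ((η u : ℂ) * (W u *ᵥ x) j) := by
          rw [Matrix.toLin'_apply]
          simp [Matrix.mulVec, dotProduct, Fintype.sum_prod_type, hLapply]
      _ = ∑ u, (A v u : ℂ) * (η u : ℂ) * (W v *ᵥ x) i :=
          Finset.sum_congr rfl fun u _ => per_u u
      _ = (∑ u, (A v u : ℂ) * (η u : ℂ)) * (W v *ᵥ x) i := by rw [Finset.sum_mul]
      _ = ((lam : ℂ) • L x) (v, i) := by rw [heig v]; simp [hLapply, smul_eq_mul]; ring
  -- membership of the range in the kernel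
  set K := LinearMap.ker
      ((lam : ℂ) • (LinearMap.id : (V × Fin n → ℂ) →ₗ[ℂ] (V × Fin n → ℂ)) -
        Matrix.toLin' B) with hKdef
  have hmem : ∀ x, L x ∈ K := by
    intro x
    rw [hKdef, LinearMap.mem_ker, LinearMap.sub_apply, LinearMap.smul_apply,
      LinearMap.id_apply, key x, sub_self]
  -- injectivity
  have hinj : Function.Injective L := by
    rw [← LinearMap.ker_eq_bot, LinearMap.ker_eq_bot']
    intro x hx
    have hW0 : W v0 *ᵥ x = 0 := by
      funext i
      have h1 := congrFun hx (v0, i)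
      have h2 : (η v0 : ℂ) ≠ 0 := Complex.ofReal_ne_zero.mpr hv0
      simpa [hLapply, h2] using h1
    have h3 : (star (W v0) * W v0) *ᵥ x = 0 := by
      rw [← Matrix.mulVec_mulVec, hW0, Matrix.mulVec_zero]
    rwa [Matrix.mem_unitaryGroup_iff'.mp (hWuni v0), Matrix.one_mulVec] at h3
  -- conclude
  have hinj' : Function.Injective (LinearMap.codRestrict K L hmem) := fun x y hxy =>
    hinj (Subtype.ext_iff.mp hxy)
  have h4 : Module.finrank ℂ (Fin n → ℂ) ≤ Module.finrank ℂ K :=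
    LinearMap.finrank_le_finrank_of_injective hinj'
  rwa [Module.finrank_fin_fun] at h4
end

section
/- Let G be a finite graph, let X ⊂ V(G) be a set of vertices inducing an acyclic subgraph (a disjoint union of trees T_1,...,T_p), and suppose λ ∈ ℝ is an eigenvalue of the Jacobi matrix of each tree T_i. Let ∂X be the set of vertices outside X adjacent to X. If p - |∂X| > 0, then λ is an eigenvalue of the Jacobi matrix A_G with multiplicity at least p - |∂X|. -/
/-- If a vertex set `X` of a finite graph induces an acyclic subgraph each of
whose connected components carries a `lam`-eigenvector of the Jacobi matrix (supported on
that component), and the number `p` of components exceeds the size of the outer boundary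
`∂X`, then `lam` is an eigenvalue of the Jacobi matrix `A` of `G` with multiplicity at
least `p - |∂X|`. -/
theorem stmt_2 {V : Type*} [Fintype V] [DecidableEq V] (G : SimpleGraph V)
    (A : Matrix V V ℂ) (hHerm : A.IsHermitian)
    (hsupp : ∀ u v : V, u ≠ v → ¬ G.Adj u v → A u v = 0)
    (X : Set V) (hacyc : (G.induce X).IsAcyclic)
    (lam : ℝ)
    (hcomp : ∀ c : (G.induce X).ConnectedComponent,
      ∃ η : V → ℂ, η ≠ 0 ∧
        (∀ v : V, (¬ ∃ h : v ∈ X, (G.induce X).connectedComponentMk ⟨v, h⟩ = c) → η v = 0) ∧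
        (∀ v : V, ∀ h : v ∈ X, (G.induce X).connectedComponentMk ⟨v, h⟩ = c →
          A.mulVec η v = (lam : ℂ) * η v))
    (hpos : ({v : V | v ∉ X ∧ ∃ u ∈ X, G.Adj u v}).ncard
      < Nat.card (G.induce X).ConnectedComponent) :
    Nat.card (G.induce X).ConnectedComponent
        - ({v : V | v ∉ X ∧ ∃ u ∈ X, G.Adj u v}).ncard
      ≤ Module.finrank ℂ
        ↥(LinearMap.ker
          ((lam : ℂ) • (LinearMap.id : (V → ℂ) →ₗ[ℂ] (V → ℂ)) - Matrix.toLin' A)) := by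
  classical
  set B : Set V := {v : V | v ∉ X ∧ ∃ u ∈ X, G.Adj u v} with hBdef
  choose η hη0 hηsupp hηeig using hcomp
  haveI : Fintype (G.induce X).ConnectedComponent := Fintype.ofFinite _
  set M : (V → ℂ) →ₗ[ℂ] (V → ℂ) :=
    (lam : ℂ) • (LinearMap.id : (V → ℂ) →ₗ[ℂ] (V → ℂ)) - Matrix.toLin' A with hMdef
  -- each eigenvector satisfies the eigen-equation away from the boundary B
  have key : ∀ c, ∀ v : V, v ∉ B → M (η c) v = 0 := by
    intro c v hvB
    have hM : M (η c) v = (lam : ℂ) * η c v - A.mulVec (η c) v := by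
      simp [hMdef, Matrix.toLin'_apply, Matrix.mulVec, mul_comm]
    rw [hM]
    by_cases hvX : v ∈ X
    · by_cases hc : (G.induce X).connectedComponentMk ⟨v, hvX⟩ = c
      · rw [hηeig c v hvX hc]; ring
      · have hzero : η c v = 0 := by
          apply hηsupp c v
          rintro ⟨h', e⟩
          exact hc (by convert e)
        have hmv : A.mulVec (η c) v = 0 := by
          unfold Matrix.mulVec dotProduct
          apply Finset.sum_eq_zero
          intro u _
          by_cases hu : η c u = 0
          · simp [hu]
          · -- u lies in X, in component c
            have hex : ∃ h : u ∈ X, (G.induce X).connectedComponentMk ⟨u, h⟩ = c := by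
              by_contra hcon
              exact hu (hηsupp c u hcon)
            obtain ⟨huX, hucomp⟩ := hex
            have hvu : v ≠ u := by
              rintro rfl
              exact hc (by convert hucomp)
            have hnadj : ¬ G.Adj v u := by
              intro hadj
              have hadj' : (G.induce X).Adj ⟨v, hvX⟩ ⟨u, huX⟩ := by
                simpa [SimpleGraph.comap_adj] using hadj
              have := SimpleGraph.ConnectedComponent.sound hadj'.reachable
              rw [hucomp] at this
              exact hc this
            simp only []; rw [hsupp v u hvu hnadj, zero_mul]
        rw [hzero, hmv]; ring
    · have hzero : η c v = 0 := by
        apply hηsupp c v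
        rintro ⟨h', -⟩
        exact hvX h'
      have hmv : A.mulVec (η c) v = 0 := by
        unfold Matrix.mulVec dotProduct
        apply Finset.sum_eq_zero
        intro u _
        by_cases hu : η c u = 0
        · simp [hu]
        · have hex : ∃ h : u ∈ X, (G.induce X).connectedComponentMk ⟨u, h⟩ = c := by
            by_contra hcon
            exact hu (hηsupp c u hcon)
          obtain ⟨huX, -⟩ := hex
          have hvu : v ≠ u := by rintro rfl; exact hvX huX
          have hnadj : ¬ G.Adj v u := by
            intro hadj
            exact hvB ⟨hvX, u, huX, hadj.symm⟩
          simp only []; rw [hsupp v u hvu hnadj, zero_mul]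
      rw [hzero, hmv]; ring
  -- the combination map
  let L : ((G.induce X).ConnectedComponent → ℂ) →ₗ[ℂ] (V → ℂ) :=
    { toFun := fun t => ∑ c, t c • η c
      map_add' := by
        intro t s
        simp [add_smul, Finset.sum_add_distrib]
      map_smul' := by
        intro a t
        simp [smul_smul, Finset.smul_sum] }
  -- each η c is nonzero and supported on its own component, so L is injective
  have hLinj : Function.Injective L := by
    rw [injective_iff_map_eq_zero]
    intro t ht
    funext c
    obtain ⟨v, hv⟩ := Function.ne_iff.mp (hη0 c)
    have hex : ∃ h : v ∈ X, (G.induce X).connectedComponentMk ⟨v, h⟩ = c := by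
      by_contra hcon
      exact hv (hηsupp c v hcon)
    obtain ⟨hvX, hvc⟩ := hex
    have hother : ∀ c' : (G.induce X).ConnectedComponent, c' ≠ c → η c' v = 0 := by
      intro c' hne
      apply hηsupp c' v
      rintro ⟨h', e⟩
      apply hne
      rw [← e, ← hvc]
    have hLv : (L t) v = t c * η c v := by
      show (∑ c', t c' • η c') v = t c * η c v
      rw [Finset.sum_apply]
      rw [Finset.sum_eq_single c]
      · simp
      · intro c' _ hne
        simp [hother c' hne]
      · intro h; exact absurd (Finset.mem_univ c) h
    have : t c * η c v = 0 := by rw [← hLv, ht]; simp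
    rcases mul_eq_zero.mp this with h | h
    · exact h
    · exact absurd h hv
  -- boundary evaluation map
  haveI : Fintype B := Fintype.ofFinite _
  let F : ((G.induce X).ConnectedComponent → ℂ) →ₗ[ℂ] (↥B → ℂ) :=
    (LinearMap.funLeft ℂ ℂ (fun b : ↥B => (b : V))) ∘ₗ M ∘ₗ L
  -- elements of ker F are mapped by L into ker M
  have hmap : Submodule.map L (LinearMap.ker F) ≤ LinearMap.ker M := by
    rintro x ⟨t, ht, rfl⟩
    rw [LinearMap.mem_ker]
    funext v
    by_cases hvB : v ∈ B
    · have := congrFun (LinearMap.mem_ker.mp ht) ⟨v, hvB⟩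
      simpa [F, LinearMap.funLeft] using this
    · have hML : M (L t) = ∑ c, t c • M (η c) := by
        show M (∑ c, t c • η c) = _
        rw [map_sum]
        simp
      rw [hML]
      rw [Finset.sum_apply]
      apply Finset.sum_eq_zero
      intro c _
      simp [key c v hvB]
  -- dimension counting
  have hfinrank_dom : Module.finrank ℂ ((G.induce X).ConnectedComponent → ℂ)
      = Nat.card (G.induce X).ConnectedComponent := by
    rw [Module.finrank_fintype_fun_eq_card, Nat.card_eq_fintype_card]
  have hfinrank_cod : Module.finrank ℂ (↥B → ℂ) = B.ncard := by
    rw [Module.finrank_fintype_fun_eq_card, ← Nat.card_coe_set_eq,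
      Nat.card_eq_fintype_card]
  have hrn := LinearMap.finrank_range_add_finrank_ker F
  have hrange : Module.finrank ℂ ↥(LinearMap.range F) ≤ B.ncard := by
    rw [← hfinrank_cod]
    exact Submodule.finrank_le _
  have hker : Nat.card (G.induce X).ConnectedComponent - B.ncard
      ≤ Module.finrank ℂ ↥(LinearMap.ker F) := by
    omega
  have heq : Module.finrank ℂ ↥(LinearMap.ker F)
      = Module.finrank ℂ ↥(Submodule.map L (LinearMap.ker F)) :=
    (Submodule.equivMapOfInjective L hLinj (LinearMap.ker F)).finrank_eq
  calc Nat.card (G.induce X).ConnectedComponent - B.ncard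
      ≤ Module.finrank ℂ ↥(LinearMap.ker F) := hker
    _ = Module.finrank ℂ ↥(Submodule.map L (LinearMap.ker F)) := heq
    _ ≤ Module.finrank ℂ ↥(LinearMap.ker M) := Submodule.finrank_mono hmap
end

section
/- Let G be a finite graph, X ⊂ V(G) inducing an acyclic subgraph whose connected components T_1,...,T_p each have λ as an eigenvalue of their induced Jacobi matrix, and suppose p - |∂X| > 0. Let U : E(G) → U(n) be unitary edge weights with U_{ě} = U_e^*. Then λ is an eigenvalue of the unitary-weighted Jacobi operator A_{G,U} on ℂ^V ⊗ ℂ^n with multiplicity at least n(p - |∂X|). -/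
/-!
On each tree of `X` the edge weights are a pure gauge: transporting along the unique paths from a
root gives invertible (unitary) `g v` with `g v = U v u * g u` on every edge of `X`. Hence, for a
`λ`-eigenvector `η` of a tree and `ξ ∈ ℂⁿ`, the vector `v ↦ η v • g v ξ` satisfies the eigenvalue
equation of `A_{G,U}` at every vertex outside `∂X`. These vectors span a space of dimension `n p`,
and imposing the equation on `∂X` as well costs at most `n |∂X|` linear conditions.
-/

open scoped Matrix

namespace SimpleGraph

variable {W : Type*} {H : SimpleGraph W} {Γ : Type*} [Group Γ]

/-- Transport along `p`, where `M b a` transports from `a` to `b`: the factors of later darts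
stand to the left. -/
def Walk.holonomy (M : W → W → Γ) {a b : W} (p : H.Walk a b) : Γ :=
  (p.darts.map fun d => M d.snd d.fst).reverse.prod

namespace Walk

variable (M : W → W → Γ)

@[simp]
lemma holonomy_append {a b d : W} (p : H.Walk a b) (q : H.Walk b d) :
    (p.append q).holonomy M = q.holonomy M * p.holonomy M := by
  simp [holonomy, darts_append]

@[simp]
lemma holonomy_concat {a b d : W} (p : H.Walk a b) (h : H.Adj b d) :
    (p.concat h).holonomy M = M d b * p.holonomy M := by
  simp [holonomy, darts_concat]

@[simp]
lemma holonomy_copy {a b a' b' : W} (p : H.Walk a b) (ha : a = a') (hb : b = b') :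
    (p.copy ha hb).holonomy M = p.holonomy M := by
  subst ha hb
  rfl

end Walk

variable {M : W → W → Γ}

lemma IsAcyclic.eq_of_isPath (hH : H.IsAcyclic) {a b : W} {p q : H.Walk a b} (hp : p.IsPath)
    (hq : q.IsPath) : p = q :=
  congrArg Subtype.val ((hH.subsingleton_path a b).elim ⟨p, hp⟩ ⟨q, hq⟩)

lemma IsAcyclic.holonomy_eq_mul_of_adj (hH : H.IsAcyclic)
    (hM : ∀ a b, H.Adj a b → M b a = (M a b)⁻¹) {r u v : W} {p : H.Walk r u} {q : H.Walk r v}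
    (hp : p.IsPath) (hq : q.IsPath) (huv : H.Adj u v) :
    q.holonomy M = M v u * p.holonomy M := by
  classical
  by_cases hv : v ∈ p.support
  · have hp' : p.holonomy M = M u v * q.holonomy M := by
      rw [← p.take_spec hv, Walk.holonomy_append, hH.eq_of_isPath (hp.takeUntil hv) hq,
        hH.eq_of_isPath (hp.dropUntil hv) (Path.singleton huv.symm).2]
      simp [Walk.holonomy]
    rw [hp', hM u v huv, inv_mul_cancel_left]
  · rw [hH.eq_of_isPath hq (hp.concat hv huv), Walk.holonomy_concat]

theorem IsAcyclic.exists_gauge (hH : H.IsAcyclic) (hM : ∀ a b, H.Adj a b → M b a = (M a b)⁻¹) :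
    ∃ g : W → Γ, ∀ u v, H.Adj u v → g v = M v u * g u := by
  classical
  choose root hroot using fun c : H.ConnectedComponent => c.exists_rep
  let path (v : W) : H.Path (root (H.connectedComponentMk v)) v :=
    (ConnectedComponent.exact (hroot _)).some.toPath
  refine ⟨fun v => (path v).1.holonomy M, fun u v huv => ?_⟩
  have hc : H.connectedComponentMk u = H.connectedComponentMk v :=
    ConnectedComponent.sound huv.reachable
  dsimp only
  rw [← Walk.holonomy_copy M (path u).1 (congrArg root hc) rfl]
  exact hH.holonomy_eq_mul_of_adj hM ((Walk.isPath_copy _ _ _).mpr (path u).2) (path v).2 huv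

lemma exists_matrix_gauge_of_isAcyclic_induce {𝕜 : Type*} [Semiring 𝕜] {n : ℕ}
    {G : SimpleGraph W} {X : Set W} (hX : (G.induce X).IsAcyclic)
    {U : W → W → Matrix (Fin n) (Fin n) 𝕜} (hU : ∀ u v, G.Adj u v → U v u * U u v = 1) :
    ∃ g : W → Matrix (Fin n) (Fin n) 𝕜,
      (∀ v, IsUnit (g v)) ∧ ∀ u v, u ∈ X → v ∈ X → G.Adj u v → g v = U v u * g u := by
  classical
  let M (a b : X) : (Matrix (Fin n) (Fin n) 𝕜)ˣ :=
    if h : G.Adj a b then ⟨U a b, U b a, hU b a h.symm, hU a b h⟩ else 1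
  have hM (a b : X) (h : G.Adj a b) : M b a = (M a b)⁻¹ := by
    simp only [M, dif_pos h, dif_pos h.symm]
    rfl
  obtain ⟨g, hg⟩ := hX.exists_gauge hM
  refine ⟨fun v => if h : v ∈ X then (g ⟨v, h⟩ : Matrix _ _ 𝕜) else 1, fun v => ?_,
    fun u v hu hv huv => ?_⟩
  · dsimp only
    split_ifs
    exacts [Units.isUnit _, isUnit_one]
  · simp [dif_pos hu, dif_pos hv, hg ⟨u, hu⟩ ⟨v, hv⟩ huv, M, huv.symm]

def outerBoundary (G : SimpleGraph W) (X : Set W) : Set W :=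
  {v | v ∉ X ∧ ∃ u ∈ X, G.Adj u v}

end SimpleGraph

theorem LinearMap.finrank_sub_finrank_le_finrank_ker {K E F G W : Type*} [DivisionRing K]
    [AddCommGroup E] [Module K E] [AddCommGroup F] [Module K F] [AddCommGroup G] [Module K G]
    [AddCommGroup W] [Module K W] [FiniteDimensional K E] [FiniteDimensional K F]
    [FiniteDimensional K W] {Φ : E →ₗ[K] F} (hΦ : Function.Injective Φ) (L : F →ₗ[K] G)
    (P : G →ₗ[K] W) (h : ∀ x, P (L (Φ x)) = 0 → L (Φ x) = 0) :
    Module.finrank K E - Module.finrank K W ≤ Module.finrank K (ker L) := by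
  let T := P ∘ₗ L ∘ₗ Φ
  have hnullity := T.finrank_range_add_finrank_ker
  have hrange : Module.finrank K (range T) ≤ Module.finrank K W := Submodule.finrank_le _
  have hker : Module.finrank K (ker T) ≤ Module.finrank K (ker L) :=
    LinearMap.finrank_le_finrank_of_injective (f := Φ.restrict fun x hx => h x hx)
      fun x y hxy => Subtype.ext (hΦ (congrArg Subtype.val hxy))
  omega

namespace Matrix

variable {V 𝕜 C : Type*} [Field 𝕜] [Fintype C] {n : ℕ}

def gaugeEmbedding (g : V → Matrix (Fin n) (Fin n) 𝕜) (η : C → V → 𝕜) :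
    (C → Fin n → 𝕜) →ₗ[𝕜] (V × Fin n → 𝕜) where
  toFun ξ q := (g q.1 *ᵥ ∑ c, η c q.1 • ξ c) q.2
  map_add' ξ ξ' := by
    ext q
    simp [smul_add, Finset.sum_add_distrib, mulVec_add]
  map_smul' a ξ := by
    ext q
    simp [smul_comm _ a, ← Finset.smul_sum, mulVec_smul]

lemma gaugeEmbedding_injective {g : V → Matrix (Fin n) (Fin n) 𝕜} {η : C → V → 𝕜}
    (hg : ∀ v, IsUnit (g v)) (hη : ∀ c, η c ≠ 0)
    (hdisj : ∀ c c' v, η c v ≠ 0 → η c' v ≠ 0 → c = c') :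
    Function.Injective (gaugeEmbedding g η) := by
  refine (injective_iff_map_eq_zero _).mpr fun ξ hξ => funext fun c => ?_
  obtain ⟨v, hv⟩ := Function.ne_iff.mp (hη c)
  have hsum : ∑ c', η c' v • ξ c' = η c v • ξ c :=
    Finset.sum_eq_single c (fun c' _ hc' => by
      rw [not_ne_iff.mp fun h => hc' (hdisj c' c v h hv), zero_smul]) (by simp)
  have hzero : g v *ᵥ (η c v • ξ c) = 0 := by
    ext i
    rw [← hsum]
    exact congrFun hξ (v, i)
  rw [← mulVec_zero (g v), (mulVec_injective_iff_isUnit.mpr (hg v)).eq_iff] at hzero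
  exact (smul_eq_zero.mp hzero).resolve_left hv

variable [Fintype V] {G : SimpleGraph V} {X : Set V} {A : Matrix V V 𝕜}

lemma mulVec_apply_eq_of_notMem_outerBoundary
    (hA : ∀ u v, u ≠ v → ¬ G.Adj u v → A u v = 0) {c : (G.induce X).ConnectedComponent}
    {η : V → 𝕜} {lam : 𝕜}
    (hη : ∀ v, (¬ ∃ h : v ∈ X, (G.induce X).connectedComponentMk ⟨v, h⟩ = c) → η v = 0)
    (heig : ∀ v (h : v ∈ X), (G.induce X).connectedComponentMk ⟨v, h⟩ = c →
      (A *ᵥ η) v = lam * η v)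
    {v : V} (hv : v ∉ G.outerBoundary X) : (A *ᵥ η) v = lam * η v := by
  by_cases hvc : ∃ h : v ∈ X, (G.induce X).connectedComponentMk ⟨v, h⟩ = c
  · obtain ⟨hvX, hvc⟩ := hvc
    exact heig v hvX hvc
  rw [hη v hvc, mul_zero]
  refine Finset.sum_eq_zero fun u _ => show A v u * η u = 0 from ?_
  by_cases hu : η u = 0
  · rw [hu, mul_zero]
  obtain ⟨huX, huc⟩ := not_imp_comm.mp (hη u) hu
  have hvu : v ≠ u := by rintro rfl; exact hvc ⟨huX, huc⟩
  rw [hA v u hvu fun hadj => ?_, zero_mul]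
  by_cases hvX : v ∈ X
  · have hadjX : (G.induce X).Adj ⟨v, hvX⟩ ⟨u, huX⟩ := hadj
    exact hvc ⟨hvX, (SimpleGraph.ConnectedComponent.sound hadjX.reachable).trans huc⟩
  · exact hv ⟨hvX, u, huX, hadj.symm⟩

variable [DecidableEq V]

/-- The matrix of `A_{G,U}` on `𝕜^V ⊗ 𝕜ⁿ`. -/
def edgeTwist (A : Matrix V V 𝕜) (U : V → V → Matrix (Fin n) (Fin n) 𝕜) :
    Matrix (V × Fin n) (V × Fin n) 𝕜 :=
  of fun p q => if p.1 = q.1 then (if p.2 = q.2 then A p.1 p.1 else 0)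
    else A p.1 q.1 * U p.1 q.1 p.2 q.2

variable {U : V → V → Matrix (Fin n) (Fin n) 𝕜}

lemma edgeTwist_mulVec_gauge (hA : ∀ u v, u ≠ v → ¬ G.Adj u v → A u v = 0)
    {g : V → Matrix (Fin n) (Fin n) 𝕜}
    (hg : ∀ u v, u ∈ X → v ∈ X → G.Adj u v → g v = U v u * g u)
    {y : V → Fin n → 𝕜} (hy : ∀ v ∉ X, y v = 0) {v : V} (hv : v ∉ G.outerBoundary X)
    (i : Fin n) :
    (edgeTwist A U *ᵥ fun q => (g q.1 *ᵥ y q.1) q.2) (v, i) = (g v *ᵥ ∑ u, A v u • y u) i := by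
  have hstep (u : V) (hvu : v ≠ u) :
      A v u * (U v u *ᵥ g u *ᵥ y u) i = A v u * (g v *ᵥ y u) i := by
    by_cases hadj : G.Adj v u
    · by_cases huX : u ∈ X
      · have hvX : v ∈ X := by_contra fun hvX => hv ⟨hvX, u, huX, hadj.symm⟩
        rw [hg u v huX hvX hadj.symm, ← mulVec_mulVec]
      · simp [hy u huX]
    · simp [hA v u hvu hadj]
  have hterm (u : V) :
      ∑ j, edgeTwist A U (v, i) (u, j) * (g u *ᵥ y u) j = A v u * (g v *ᵥ y u) i := by
    by_cases hvu : v = u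
    · subst hvu
      simp [edgeTwist]
    · rw [← hstep u hvu]
      simp only [edgeTwist, of_apply, if_neg hvu, mulVec, dotProduct, Finset.mul_sum, mul_assoc]
  simp only [mulVec_sum, mulVec_smul, Finset.sum_apply, Pi.smul_apply, smul_eq_mul, ← hterm]
  simp [mulVec, dotProduct, Fintype.sum_prod_type]

lemma edgeTwist_mulVec_gaugeEmbedding (hA : ∀ u v, u ≠ v → ¬ G.Adj u v → A u v = 0)
    {g : V → Matrix (Fin n) (Fin n) 𝕜}
    (hg : ∀ u v, u ∈ X → v ∈ X → G.Adj u v → g v = U v u * g u)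
    {η : C → V → 𝕜} {lam : 𝕜} (hηX : ∀ c, ∀ v ∉ X, η c v = 0)
    (heig : ∀ c, ∀ v ∉ G.outerBoundary X, (A *ᵥ η c) v = lam * η c v)
    (ξ : C → Fin n → 𝕜) {v : V} (hv : v ∉ G.outerBoundary X) (i : Fin n) :
    (edgeTwist A U *ᵥ gaugeEmbedding g η ξ) (v, i) = lam * gaugeEmbedding g η ξ (v, i) := by
  have hy : ∀ u ∉ X, ∑ c, η c u • ξ c = 0 := fun u hu => by simp [hηX _ u hu]
  have hAy : ∑ u, A v u • ∑ c, η c u • ξ c = lam • ∑ c, η c v • ξ c := by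
    calc ∑ u, A v u • ∑ c, η c u • ξ c = ∑ c, (A *ᵥ η c) v • ξ c := by
          simp only [Finset.smul_sum, smul_smul, mulVec, dotProduct, Finset.sum_smul]
          exact Finset.sum_comm
      _ = lam • ∑ c, η c v • ξ c := by
          simp only [heig _ v hv, mul_smul, Finset.smul_sum]
  refine (edgeTwist_mulVec_gauge hA hg hy hv i).trans ?_
  rw [hAy, mulVec_smul]
  rfl

theorem card_mul_sub_ncard_mul_le_finrank_ker_edgeTwist
    (hA : ∀ u v, u ≠ v → ¬ G.Adj u v → A u v = 0) {g : V → Matrix (Fin n) (Fin n) 𝕜}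
    (hg_unit : ∀ v, IsUnit (g v)) (hg : ∀ u v, u ∈ X → v ∈ X → G.Adj u v → g v = U v u * g u)
    {η : C → V → 𝕜} {lam : 𝕜} (hη0 : ∀ c, η c ≠ 0)
    (hdisj : ∀ c c' v, η c v ≠ 0 → η c' v ≠ 0 → c = c') (hηX : ∀ c, ∀ v ∉ X, η c v = 0)
    (heig : ∀ c, ∀ v ∉ G.outerBoundary X, (A *ᵥ η c) v = lam * η c v) :
    Fintype.card C * n - (G.outerBoundary X).ncard * n ≤
      Module.finrank 𝕜 (LinearMap.ker (lam • LinearMap.id - toLin' (edgeTwist A U))) := by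
  classical
  have hrank := LinearMap.finrank_sub_finrank_le_finrank_ker
    (gaugeEmbedding_injective hg_unit hη0 hdisj) (lam • LinearMap.id - toLin' (edgeTwist A U))
    (LinearMap.funLeft 𝕜 𝕜 fun q : G.outerBoundary X × Fin n => (q.1.1, q.2))
    fun ξ hξ => funext fun ⟨v, i⟩ => ?_
  · have hcod : Module.finrank 𝕜 (G.outerBoundary X × Fin n → 𝕜) =
        (G.outerBoundary X).ncard * n := by
      rw [Module.finrank_fintype_fun_eq_card, Fintype.card_prod, Fintype.card_fin,
        Set.fintypeCard_eq_ncard]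
    rw [hcod] at hrank
    simpa [Module.finrank_pi_fintype] using hrank
  · by_cases hv : v ∈ G.outerBoundary X
    · exact congrFun hξ (⟨v, hv⟩, i)
    simp [edgeTwist_mulVec_gaugeEmbedding hA hg hηX heig ξ hv i]

end Matrix

theorem stmt_3_general {V : Type*} [Fintype V] [DecidableEq V] (G : SimpleGraph V)
    (A : Matrix V V ℂ)
    (hsupp : ∀ u v : V, u ≠ v → ¬ G.Adj u v → A u v = 0)
    (X : Set V) (hacyc : (G.induce X).IsAcyclic)
    (lam : ℝ)
    (hcomp : ∀ c : (G.induce X).ConnectedComponent,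
      ∃ η : V → ℂ, η ≠ 0 ∧
        (∀ v : V, (¬ ∃ h : v ∈ X, (G.induce X).connectedComponentMk ⟨v, h⟩ = c) → η v = 0) ∧
        (∀ v : V, ∀ h : v ∈ X, (G.induce X).connectedComponentMk ⟨v, h⟩ = c →
          A.mulVec η v = (lam : ℂ) * η v))
    (n : ℕ) (U : V → V → Matrix (Fin n) (Fin n) ℂ)
    (hUuni : ∀ u v : V, G.Adj u v → U u v ∈ Matrix.unitaryGroup (Fin n) ℂ)
    (hUsym : ∀ u v : V, U v u = (U u v)ᴴ)
    (B : Matrix (V × Fin n) (V × Fin n) ℂ)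
    (hB : ∀ p q : V × Fin n, B p q =
      if p.1 = q.1 then (if p.2 = q.2 then A p.1 p.1 else 0)
      else A p.1 q.1 * U p.1 q.1 p.2 q.2) :
    n * (Nat.card (G.induce X).ConnectedComponent
        - ({v : V | v ∉ X ∧ ∃ u ∈ X, G.Adj u v}).ncard)
      ≤ Module.finrank ℂ
        ↥(LinearMap.ker
          ((lam : ℂ) • (LinearMap.id : (V × Fin n → ℂ) →ₗ[ℂ] (V × Fin n → ℂ)) -
            Matrix.toLin' B)) := by
  classical
  obtain rfl : B = Matrix.edgeTwist A U := Matrix.ext hB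
  have hUinv (u v : V) (huv : G.Adj u v) : U v u * U u v = 1 := by
    rw [hUsym]
    exact Matrix.mem_unitaryGroup_iff'.mp (hUuni u v huv)
  obtain ⟨g, hg_unit, hg⟩ := G.exists_matrix_gauge_of_isAcyclic_induce hacyc hUinv
  choose η hη0 hηX hηeig using hcomp
  have hdisj (c c' : (G.induce X).ConnectedComponent) (v : V) (hc : η c v ≠ 0)
      (hc' : η c' v ≠ 0) : c = c' := by
    obtain ⟨_, rfl⟩ := not_imp_comm.mp (hηX c v) hc
    obtain ⟨_, rfl⟩ := not_imp_comm.mp (hηX c' v) hc'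
    rfl
  have hrank := Matrix.card_mul_sub_ncard_mul_le_finrank_ker_edgeTwist hsupp hg_unit hg hη0 hdisj
    (fun c u hu => hηX c u fun ⟨h, _⟩ => hu h)
    (fun c _ hv => Matrix.mulVec_apply_eq_of_notMem_outerBoundary hsupp (hηX c) (hηeig c) hv)
  rwa [Nat.card_eq_fintype_card, Nat.mul_sub, mul_comm n, mul_comm n]

/-- Under the hypotheses of the converse Aomoto theorem (a vertex set `X`
inducing an acyclic subgraph whose `p` components each carry a `lam`-eigenvector of the
scalar Jacobi matrix, with `p - |∂X| > 0`), the unitary-weighted Jacobi operator obtained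
by twisting each edge by a unitary `U u v ∈ U(n)` (`U v u = (U u v)ᴴ`) has `lam` as an
eigenvalue with multiplicity at least `n * (p - |∂X|)`. -/
theorem stmt_3 {V : Type*} [Fintype V] [DecidableEq V] (G : SimpleGraph V)
    (A : Matrix V V ℂ) (hHerm : A.IsHermitian)
    (hsupp : ∀ u v : V, u ≠ v → ¬ G.Adj u v → A u v = 0)
    (X : Set V) (hacyc : (G.induce X).IsAcyclic)
    (lam : ℝ)
    (hcomp : ∀ c : (G.induce X).ConnectedComponent,
      ∃ η : V → ℂ, η ≠ 0 ∧
        (∀ v : V, (¬ ∃ h : v ∈ X, (G.induce X).connectedComponentMk ⟨v, h⟩ = c) → η v = 0) ∧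
        (∀ v : V, ∀ h : v ∈ X, (G.induce X).connectedComponentMk ⟨v, h⟩ = c →
          A.mulVec η v = (lam : ℂ) * η v))
    (hpos : ({v : V | v ∉ X ∧ ∃ u ∈ X, G.Adj u v}).ncard
      < Nat.card (G.induce X).ConnectedComponent)
    (n : ℕ) (U : V → V → Matrix (Fin n) (Fin n) ℂ)
    (hUuni : ∀ u v : V, G.Adj u v → U u v ∈ Matrix.unitaryGroup (Fin n) ℂ)
    (hUsym : ∀ u v : V, U v u = (U u v)ᴴ)
    (B : Matrix (V × Fin n) (V × Fin n) ℂ)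
    (hB : ∀ p q : V × Fin n, B p q =
      if p.1 = q.1 then (if p.2 = q.2 then A p.1 p.1 else 0)
      else A p.1 q.1 * U p.1 q.1 p.2 q.2) :
    n * (Nat.card (G.induce X).ConnectedComponent
        - ({v : V | v ∉ X ∧ ∃ u ∈ X, G.Adj u v}).ncard)
      ≤ Module.finrank ℂ
        ↥(LinearMap.ker
          ((lam : ℂ) • (LinearMap.id : (V × Fin n → ℂ) →ₗ[ℂ] (V × Fin n → ℂ)) -
            Matrix.toLin' B)) :=
  stmt_3_general G A hsupp X hacyc lam hcomp n U hUuni hUsym B hB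
end

section
/- For every finite multigraph H with girth p and 2m directed edges (m undirected edge pairs), there exists a finite lift L of H of degree 2^{m+1} whose girth is strictly larger than p. Consequently, every finite graph with a cycle admits a sequence of finite lifts whose girths diverge to infinity. -/
/-!
Give the `i`-th edge of `H`, in a fixed orientation, the voltage `±2^i` in `ℤ/2^(m+1)`, and let
the lift act on each fibre by adding voltages. The projection of the lift onto `H` is injective on
neighbourhoods, so a shortest cycle of the lift projects to a closed non-backtracking walk of the
same length. If that length were at most the girth of `H`, the projection would be a cycle of `H`;
its voltages are `±2^i` with distinct exponents, so the term of least exponent makes their sum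
nonzero modulo `2^(m+1)`. But the lifted cycle closes up, so the sum is zero.
Iterating, and merging a lift of a lift into one lift with product fibres, gives lifts of
unbounded girth.
-/

open Finset

namespace List

lemma IsChain.and {α : Type*} {R S : α → α → Prop} {l : List α} (hR : l.IsChain R)
    (hS : l.IsChain S) : l.IsChain fun a b => R a b ∧ S a b := by
  rw [isChain_iff_getElem] at *
  exact fun i hi => ⟨hR i hi, hS i hi⟩

end List

lemma Finset.exists_injOn_lt_card {α : Type*} (s : Finset α) :
    ∃ f : α → ℕ, Set.InjOn f s ∧ ∀ a ∈ s, f a < #s := by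
  classical
  refine ⟨fun a => if h : a ∈ s then s.equivFin ⟨a, h⟩ else 0, fun a ha b hb hab => ?_,
    fun a ha => by simp [ha]⟩
  simp only [mem_coe] at ha hb
  simp only [dif_pos ha, dif_pos hb] at hab
  exact congrArg Subtype.val (s.equivFin.injective (Fin.ext hab))

lemma not_two_pow_dvd_sum_odd_mul_two_pow {ι : Type*} {s : Finset ι} (hs : s.Nonempty)
    {e : ι → ℕ} (he : Set.InjOn e s) {ε : ι → ℤ} (hε : ∀ i ∈ s, Odd (ε i)) {n : ℕ}
    (hn : ∀ i ∈ s, e i ≤ n) : ¬ (2 : ℤ) ^ (n + 1) ∣ ∑ i ∈ s, ε i * 2 ^ e i := by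
  classical
  -- only the term of least exponent `e i₀` escapes divisibility by `2 ^ (e i₀ + 1)`
  obtain ⟨i₀, hi₀, hmin⟩ := s.exists_min_image e hs
  have hrest : (2 : ℤ) ^ (e i₀ + 1) ∣ ∑ i ∈ s.erase i₀, ε i * 2 ^ e i := by
    refine Finset.dvd_sum fun i hi => Dvd.dvd.mul_left (pow_dvd_pow 2 ?_) _
    obtain ⟨hne, hi⟩ := Finset.mem_erase.1 hi
    exact (hmin i hi).lt_of_ne fun h => hne (he hi hi₀ h.symm)
  rw [← Finset.add_sum_erase s _ hi₀]
  intro hdvd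
  have hlead := (dvd_add_left hrest).1 ((pow_dvd_pow 2 (Nat.succ_le_succ (hn i₀ hi₀))).trans hdvd)
  rw [pow_succ, mul_comm (ε i₀), mul_dvd_mul_iff_left (pow_ne_zero _ two_ne_zero)] at hlead
  exact Int.not_even_iff_odd.2 (hε i₀ hi₀) (even_iff_two_dvd.2 hlead)

namespace SimpleGraph

variable {V W : Type*} {G : SimpleGraph V}

namespace Walk

/-- Only consecutive darts are compared: the last and first dart of a closed walk may cancel. -/
def IsNonbacktracking {u v : V} (w : G.Walk u v) : Prop :=
  w.darts.IsChain fun d d' => d.fst ≠ d'.snd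

lemma IsNonbacktracking.of_cons {u v w : V} {h : G.Adj u v} {p : G.Walk v w}
    (hw : (cons h p).IsNonbacktracking) : p.IsNonbacktracking :=
  List.IsChain.tail hw

lemma IsTrail.isNonbacktracking {u v : V} {w : G.Walk u v} (hw : w.IsTrail) :
    w.IsNonbacktracking := by
  refine ((isChain_dartAdj_darts w).and (List.pairwise_map.1 hw.edges_nodup).isChain).imp ?_
  rintro d d' ⟨hadj, hne⟩ heq
  obtain rfl : d' = d.symm := Dart.ext _ _ (Prod.ext hadj.symm heq.symm)
  exact hne (Dart.edge_symm d).symm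

lemma IsNonbacktracking.map {G' : SimpleGraph W} {u v : V} {w : G.Walk u v}
    (hw : w.IsNonbacktracking) (f : G →g G') (hf : ∀ v, Set.InjOn f (G.neighborSet v)) :
    (w.map f).IsNonbacktracking := by
  rw [IsNonbacktracking, darts_map, List.isChain_map]
  refine ((isChain_dartAdj_darts w).and hw).imp ?_
  rintro d d' ⟨hadj, hne⟩
  exact fun h => hne (hf d.snd d.adj.symm (hadj ▸ d'.adj) h)

lemma IsNonbacktracking.isCycle_cons {u v : V} {h : G.Adj u v} {p : G.Walk v u}
    (hw : (cons h p).IsNonbacktracking) (hp : p.IsPath) : (cons h p).IsCycle := by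
  refine (cons_isCycle_iff p h).2 ⟨hp, fun he => ?_⟩
  cases p with
  | nil => exact G.irrefl h
  | cons h' q =>
    rw [cons_isPath_iff] at hp
    rcases List.mem_cons.1 he with he | he
    · obtain rfl : u = _ := by simpa [h.ne] using he
      obtain rfl := (isPath_iff_nil.1 hp.1).eq_nil
      simp [IsNonbacktracking] at hw
    · exact hp.2 (q.snd_mem_support_of_mem_edges he)

section DecidableEq

variable [DecidableEq V]

lemma IsNonbacktracking.exists_isCycle_of_not_nodup {u v : V} {w : G.Walk u v}
    (hw : w.IsNonbacktracking) (hdup : ¬ w.support.Nodup) :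
    ∃ (x : V) (c : G.Walk x x), c.IsCycle ∧ c.length ≤ w.length := by
  induction w with
  | nil => simp at hdup
  | @cons u x v h p ih =>
    by_cases hp : p.support.Nodup
    · have hu : u ∈ p.support := by simpa [hp] using hdup
      refine ⟨u, cons h (p.takeUntil u hu), IsNonbacktracking.isCycle_cons ?_
        ((IsPath.mk' hp).takeUntil hu), by simpa using p.length_takeUntil_le_length hu⟩
      exact hw.prefix (List.cons_prefix_cons.2 ⟨rfl, p.darts_takeUntil_prefix_darts hu⟩)
    · obtain ⟨y, c, hc, hlen⟩ := ih hw.of_cons hp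
      exact ⟨y, c, hc, hlen.trans (by simp)⟩

lemma IsNonbacktracking.isCycle_of_length_le_egirth {u : V} {c : G.Walk u u}
    (hc : c.IsNonbacktracking) (hne : c ≠ nil) (hlen : c.length ≤ G.egirth) : c.IsCycle := by
  cases c with
  | nil => exact absurd rfl hne
  | cons h p =>
    by_cases hp : p.support.Nodup
    · exact hc.isCycle_cons (IsPath.mk' hp)
    · obtain ⟨x, c', hc', hlen'⟩ := hc.of_cons.exists_isCycle_of_not_nodup hp
      have := Nat.cast_le.1 (hlen.trans (egirth_le_length hc'))
      simp only [length_cons] at this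
      omega

end DecidableEq

lemma IsCycle.isCycle_map_of_length_le_egirth [DecidableEq W] {G' : SimpleGraph W} {u : V}
    {c : G.Walk u u} (hc : c.IsCycle) (f : G →g G') (hf : ∀ v, Set.InjOn f (G.neighborSet v))
    (hlen : c.length ≤ G'.egirth) : (c.map f).IsCycle :=
  (hc.isTrail.isNonbacktracking.map f hf).isCycle_of_length_le_egirth
    (by simpa using hc.ne_nil) (by simpa using hlen)

end Walk

def fromRelIso {r : V → V → Prop} {s : W → W → Prop} (e : V ≃ W)
    (h : ∀ a b, s (e a) (e b) ↔ r a b) : fromRel r ≃g fromRel s where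
  toEquiv := e
  map_rel_iff' := by simp [fromRel_adj, h, e.injective.ne_iff]

section Lift

variable {F F' : Type*}

def lift (H : SimpleGraph V) (π : V → V → Equiv.Perm F) : SimpleGraph (V × F) :=
  fromRel fun p q => H.Adj p.1 q.1 ∧ q.2 = π p.1 q.1 p.2

variable {H : SimpleGraph V} {π : V → V → Equiv.Perm F}

lemma lift_adj (hπ : ∀ u v, π v u = (π u v)⁻¹) {p q : V × F} :
    (H.lift π).Adj p q ↔ H.Adj p.1 q.1 ∧ q.2 = π p.1 q.1 p.2 := by
  rw [lift, fromRel_adj]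
  constructor
  · rintro ⟨-, h | ⟨hadj, heq⟩⟩
    · exact h
    · exact ⟨hadj.symm, by rw [hπ, heq]; exact (Equiv.Perm.inv_eq_iff_eq.2 rfl).symm⟩
  · exact fun h => ⟨fun hpq => H.irrefl (hpq ▸ h.1), .inl h⟩

variable (H π) in
def liftProj : H.lift π →g H where
  toFun := Prod.fst
  map_rel' h := by
    obtain ⟨-, h | h⟩ := fromRel_adj _ _ _ |>.1 h
    exacts [h.1, h.1.symm]

@[simp]
lemma liftProj_apply (p : V × F) : liftProj H π p = p.1 := rfl

lemma liftProj_injOn_neighborSet (hπ : ∀ u v, π v u = (π u v)⁻¹) (p : V × F) :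
    Set.InjOn (liftProj H π) ((H.lift π).neighborSet p) := by
  intro q hq q' hq' h
  rw [mem_neighborSet, lift_adj hπ] at hq hq'
  exact Prod.ext h (by rw [hq.2, hq'.2, show q.1 = q'.1 from h])

lemma egirth_lift_permCongr (e : F ≃ F') :
    (H.lift fun u v => e.permCongr (π u v)).egirth = (H.lift π).egirth :=
  (fromRelIso ((Equiv.refl V).prodCongr e) fun p q => by simp).egirth_eq.symm

lemma egirth_lift_lift (hπ : ∀ u v, π v u = (π u v)⁻¹) (π' : V × F → V × F → Equiv.Perm F') :
    ((H.lift π).lift π').egirth =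
      (H.lift fun u v => (π u v).prodShear fun i => π' (u, i) (v, π u v i)).egirth := by
  refine (fromRelIso (Equiv.prodAssoc V F F') fun ⟨⟨u, i⟩, j⟩ ⟨⟨v, i'⟩, j'⟩ => ?_).egirth_eq
  simp only [lift_adj hπ, Equiv.prodAssoc_apply, Equiv.prodShear_apply, Prod.mk.injEq]
  constructor
  · rintro ⟨hadj, rfl, rfl⟩
    exact ⟨⟨hadj, rfl⟩, rfl⟩
  · rintro ⟨⟨hadj, rfl⟩, rfl⟩
    exact ⟨hadj, rfl, rfl⟩

lemma exists_lift_fin_egirth_eq_egirth_lift_lift {N N' : ℕ} {π : V → V → Equiv.Perm (Fin N)}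
    (hπ : ∀ u v, π v u = (π u v)⁻¹) {π' : V × Fin N → V × Fin N → Equiv.Perm (Fin N')}
    (hπ' : ∀ p q, π' q p = (π' p q)⁻¹) :
    ∃ σ : V → V → Equiv.Perm (Fin (N * N')), (∀ u v, σ v u = (σ u v)⁻¹) ∧
      (H.lift σ).egirth = ((H.lift π).lift π').egirth := by
  set τ : V → V → Equiv.Perm (Fin N × Fin N') := fun u v =>
    (π u v).prodShear fun i => π' (u, i) (v, π u v i)
  have hτ : ∀ u v, τ v u = (τ u v)⁻¹ := by
    intro u v
    rw [eq_inv_iff_mul_eq_one]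
    ext ⟨i, j⟩ <;> simp [τ, hπ u v, hπ' (u, _)]
  refine ⟨fun u v => finProdFinEquiv.permCongr (τ u v), fun u v => ?_, ?_⟩
  · show finProdFinEquiv.permCongr (τ v u) = _
    rw [hτ]
    exact map_inv finProdFinEquiv.permCongrHom (τ u v)
  · rw [egirth_lift_permCongr, egirth_lift_lift hπ]

end Lift

section Voltage

variable {Γ : Type*} [AddCommGroup Γ] {H : SimpleGraph V} {α : V → V → Γ}

lemma addLeft_skew (hα : ∀ u v, α v u = -α u v) (u v : V) :
    Equiv.addLeft (α v u) = (Equiv.addLeft (α u v))⁻¹ := by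
  rw [hα, Equiv.neg_addLeft]

lemma snd_eq_sum_add_snd (hα : ∀ u v, α v u = -α u v) {p q : V × Γ}
    (w : (H.lift fun u v => Equiv.addLeft (α u v)).Walk p q) :
    q.2 = ((w.map (liftProj _ _)).darts.map fun d => α d.fst d.snd).sum + p.2 := by
  induction w with
  | nil => simp
  | cons h w ih =>
    rw [ih, ((lift_adj (addLeft_skew hα)).1 h).2, Walk.map_cons, Walk.darts_cons, List.map_cons,
      List.sum_cons, Equiv.coe_addLeft]
    simp only [liftProj_apply]
    abel

theorem egirth_lt_egirth_lift_addLeft [DecidableEq V] (hα : ∀ u v, α v u = -α u v)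
    (hcyc : ∀ u (c : H.Walk u u), c.IsCycle → (c.darts.map fun d => α d.fst d.snd).sum ≠ 0)
    (hH : H.egirth ≠ ⊤) : H.egirth < (H.lift fun u v => Equiv.addLeft (α u v)).egirth := by
  have hπ := addLeft_skew hα
  by_contra! hle
  have hL : ¬ (H.lift fun u v => Equiv.addLeft (α u v)).IsAcyclic := fun hL =>
    hH (top_le_iff.1 (egirth_eq_top.2 hL ▸ hle))
  obtain ⟨p, c, hc, hlen⟩ := exists_egirth_eq_length.2 hL
  have hmap := hc.isCycle_map_of_length_le_egirth _ (liftProj_injOn_neighborSet hπ) (hlen ▸ hle)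
  exact hcyc _ _ hmap (by simpa using snd_eq_sum_add_snd hα c)

end Voltage

section BinaryVoltage

def binaryVoltage (ord : V → ℤ) (idx : Sym2 V → ℕ) (u v : V) : ℤ :=
  (ord v - ord u).sign * 2 ^ idx s(u, v)

lemma binaryVoltage_swap (ord : V → ℤ) (idx : Sym2 V → ℕ) (u v : V) :
    binaryVoltage ord idx v u = -binaryVoltage ord idx u v := by
  rw [binaryVoltage, binaryVoltage, Sym2.eq_swap, ← neg_sub, Int.sign_neg, neg_mul]

lemma not_two_pow_dvd_sum_binaryVoltage {H : SimpleGraph V} {ord : V → ℤ}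
    (hord : Function.Injective ord) {idx : Sym2 V → ℕ} (hidx : Set.InjOn idx H.edgeSet) {n : ℕ}
    (hn : ∀ e ∈ H.edgeSet, idx e ≤ n) {u : V} {c : H.Walk u u} (hc : c.IsCycle) :
    ¬ (2 : ℤ) ^ (n + 1) ∣ (c.darts.map fun d => binaryVoltage ord idx d.fst d.snd).sum := by
  classical
  have hedges := hc.isTrail.edges_nodup
  rw [← List.sum_toFinset _ (hedges.of_map _)]
  refine not_two_pow_dvd_sum_odd_mul_two_pow (e := fun d : H.Dart => idx d.edge) ?_ ?_ ?_
    fun d _ => hn _ d.edge_mem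
  · simpa using hc.ne_nil
  · intro d hd d' hd' h
    exact List.inj_on_of_nodup_map hedges (List.mem_toFinset.1 hd) (List.mem_toFinset.1 hd')
      (hidx d.edge_mem d'.edge_mem h)
  · intro d _
    rw [← Int.natAbs_odd, Int.natAbs_sign_of_ne_zero (sub_ne_zero.2 (hord.ne d.snd_ne_fst))]
    exact odd_one

end BinaryVoltage

open Fin.CommRing in
theorem exists_lift_egirth_lt [Countable V] (H : SimpleGraph V) [Fintype H.edgeSet]
    (hH : H.egirth ≠ ⊤) :
    ∃ π : V → V → Equiv.Perm (Fin (2 ^ (#H.edgeFinset + 1))),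
      (∀ u v, π v u = (π u v)⁻¹) ∧ H.egirth < (H.lift π).egirth := by
  classical
  obtain ⟨ord, hord⟩ := Countable.exists_injective_nat V
  obtain ⟨idx, hidx, hlt⟩ := H.edgeFinset.exists_injOn_lt_card
  simp only [coe_edgeFinset, mem_edgeFinset] at hidx hlt
  have hα : ∀ u v, ((binaryVoltage (ord ·) idx v u : ℤ) : Fin (2 ^ (#H.edgeFinset + 1))) =
      -binaryVoltage (ord ·) idx u v := by
    intro u v
    rw [binaryVoltage_swap, Int.cast_neg]
  refine ⟨_, addLeft_skew hα, egirth_lt_egirth_lift_addLeft hα (fun u c hc => ?_) hH⟩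
  have hsum := not_two_pow_dvd_sum_binaryVoltage (Nat.cast_injective.comp hord) hidx
    (fun e he => (hlt e he).le) hc
  rw [← Nat.cast_ofNat, ← Nat.cast_pow,
    ← CharP.intCast_eq_zero_iff (Fin (2 ^ (#H.edgeFinset + 1)))] at hsum
  simpa [Int.cast_list_sum, Function.comp_def] using hsum

theorem exists_lift_egirth_gt [Finite V] (H : SimpleGraph V) (k : ℕ) :
    ∃ (N : ℕ) (π : V → V → Equiv.Perm (Fin N)),
      (∀ u v, π v u = (π u v)⁻¹) ∧ (k : ℕ∞) < (H.lift π).egirth := by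
  classical
  have := Fintype.ofFinite V
  induction k with
  | zero => exact ⟨1, fun _ _ => 1, by simp, lt_of_lt_of_le (by norm_num) three_le_egirth⟩
  | succ k ih =>
    obtain ⟨N, π, hπ, hk⟩ := ih
    by_cases htop : (H.lift π).egirth = ⊤
    · exact ⟨N, π, hπ, htop ▸ ENat.natCast_lt_top _⟩
    obtain ⟨π', hπ', hlt⟩ := exists_lift_egirth_lt (H.lift π) htop
    obtain ⟨σ, hσ, heq⟩ := exists_lift_fin_egirth_eq_egirth_lift_lift hπ hπ'
    refine ⟨_, σ, hσ, heq ▸ lt_of_le_of_lt ?_ hlt⟩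
    exact_mod_cast Order.add_one_le_of_lt hk

end SimpleGraph

theorem stmt_4_general {V : Type*} [Fintype V] (H : SimpleGraph V)
    [DecidableRel H.Adj] (hgirth : H.egirth ≠ ⊤) (m : ℕ)
    (hm : H.edgeFinset.card = m) :
    (∃ π : V → V → Equiv.Perm (Fin (2 ^ (m + 1))),
      (∀ u v : V, π v u = (π u v)⁻¹) ∧
      H.egirth <
        (SimpleGraph.fromRel
          (fun p q : V × Fin (2 ^ (m + 1)) =>
            H.Adj p.1 q.1 ∧ q.2 = π p.1 q.1 p.2)).egirth) ∧
    (∀ k : ℕ, ∃ (N : ℕ) (π : V → V → Equiv.Perm (Fin N)),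
      (∀ u v : V, π v u = (π u v)⁻¹) ∧
      (k : ℕ∞) <
        (SimpleGraph.fromRel
          (fun p q : V × Fin N => H.Adj p.1 q.1 ∧ q.2 = π p.1 q.1 p.2)).egirth) :=
  ⟨hm ▸ H.exists_lift_egirth_lt hgirth, H.exists_lift_egirth_gt⟩

/-- Every finite graph `H` with `m` (undirected) edges and finite girth admits
a lift of degree `2^(m+1)` — given by permutations `π u v` on the fibres with
`π v u = (π u v)⁻¹` — whose girth is strictly larger; consequently for every `k` there is a
finite lift of `H` of girth exceeding `k`, i.e. `H` admits lifts of divergent girth. -/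
theorem stmt_4 {V : Type*} [Fintype V] [DecidableEq V] (H : SimpleGraph V)
    [DecidableRel H.Adj] (hgirth : H.egirth ≠ ⊤) (m : ℕ)
    (hm : H.edgeFinset.card = m) :
    (∃ π : V → V → Equiv.Perm (Fin (2 ^ (m + 1))),
      (∀ u v : V, π v u = (π u v)⁻¹) ∧
      H.egirth <
        (SimpleGraph.fromRel
          (fun p q : V × Fin (2 ^ (m + 1)) =>
            H.Adj p.1 q.1 ∧ q.2 = π p.1 q.1 p.2)).egirth) ∧
    (∀ k : ℕ, ∃ (N : ℕ) (π : V → V → Equiv.Perm (Fin N)),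
      (∀ u v : V, π v u = (π u v)⁻¹) ∧
      (k : ℕ∞) <
        (SimpleGraph.fromRel
          (fun p q : V × Fin N => H.Adj p.1 q.1 ∧ q.2 = π p.1 q.1 p.2)).egirth) :=
  stmt_4_general H hgirth m hm
end

section
/- Let T be a finite tree with Hermitian edge weights and real potential, rooted at r, and let η be an eigenvector of A_T with eigenvalue λ such that η is nowhere zero. Then for every vertex v ≠ r and every ζ ∈ Ker(λ - A_T), one has ζ(v) η(p(v)) = ζ(p(v)) η(v) · |a_{p(v)←v}|²/|a_{v←p(v)}|² = ζ(p(v)) η(v), where p(v) is the parent of v; hence ζ = (ζ(r)/η(r)) η. -/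
/-!
For `ζ, η` in the `λ`-eigenspace of a Hermitian matrix `A`, the edge Wronskian
`W(u, w) = conj ζ(u) a_{u←w} η(w) - conj ζ(w) a_{w←u} η(u)` is antisymmetric, and
`∑_w W(u, w) = 0` for every `u`. Summing over `u ∈ S`, the pairs inside `S` cancel, so the
Wronskian across the boundary of any vertex set `S` vanishes. In a tree every edge `vw` is a
bridge; taking for `S` the side of `v`, the boundary is `vw` alone, so `W(v, w) = 0`.
Comparing with the same identity for `ζ = η` gives `ζ(v) η(w) = ζ(w) η(v)`: the ratio
`ζ / η` is constant along edges, hence on the whole tree.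
-/

open Finset SimpleGraph

lemma SimpleGraph.Reachable.apply_eq_of_forall_adj {V β : Type*} {G : SimpleGraph V}
    {f : V → β} (hf : ∀ u w, G.Adj u w → f u = f w) {u w : V} (h : G.Reachable u w) :
    f u = f w := by
  obtain ⟨p⟩ := h
  induction p with
  | nil => rfl
  | cons hadj _ ih => exact (hf _ _ hadj).trans ih

namespace Matrix

variable {n 𝕜 : Type*} [RCLike 𝕜]

def edgeWronskian (A : Matrix n n 𝕜) (ζ η : n → 𝕜) (u w : n) : 𝕜 :=
  star (ζ u) * A u w * η w - star (ζ w) * A w u * η u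

variable {A : Matrix n n 𝕜} {ζ η : n → 𝕜}

lemma edgeWronskian_swap (u w : n) : A.edgeWronskian ζ η w u = -A.edgeWronskian ζ η u w := by
  simp only [edgeWronskian]
  ring

variable [Fintype n] {lam : ℝ}

lemma sum_edgeWronskian_eq_zero (hA : A.IsHermitian) (hη : A *ᵥ η = (lam : 𝕜) • η)
    (hζ : A *ᵥ ζ = (lam : 𝕜) • ζ) (u : n) : ∑ w, A.edgeWronskian ζ η u w = 0 := by
  have hAη : ∑ w, A u w * η w = lam * η u := by
    simpa [mulVec, dotProduct] using congrFun hη u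
  have hAζ : ∑ w, star (ζ w) * A w u = lam * star (ζ u) := by
    have hlam : star (lam : 𝕜) = lam := RCLike.conj_ofReal lam
    have := congrArg star (congrFun hζ u)
    simp only [mulVec, dotProduct, star_sum, star_mul', Pi.smul_apply, smul_eq_mul, hA.apply,
      hlam] at this
    simpa only [mul_comm] using this
  calc ∑ w, A.edgeWronskian ζ η u w
      = star (ζ u) * ∑ w, A u w * η w - (∑ w, star (ζ w) * A w u) * η u := by
        simp only [edgeWronskian, sum_sub_distrib, mul_sum, sum_mul, mul_assoc]
    _ = 0 := by rw [hAη, hAζ]; ring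

lemma sum_sum_compl_edgeWronskian_eq_zero [DecidableEq n] (hA : A.IsHermitian)
    (hη : A *ᵥ η = (lam : 𝕜) • η) (hζ : A *ᵥ ζ = (lam : 𝕜) • ζ) (S : Finset n) :
    ∑ u ∈ S, ∑ w ∈ Sᶜ, A.edgeWronskian ζ η u w = 0 := by
  have inside : ∑ u ∈ S, ∑ w ∈ S, A.edgeWronskian ζ η u w = 0 := by
    have h : ∑ u ∈ S, ∑ w ∈ S, A.edgeWronskian ζ η u w
        = -∑ u ∈ S, ∑ w ∈ S, A.edgeWronskian ζ η u w := by
      rw [← sum_neg_distrib]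
      refine sum_comm.trans (sum_congr rfl fun u _ => ?_)
      rw [← sum_neg_distrib]
      exact sum_congr rfl fun w _ => edgeWronskian_swap u w
    linear_combination h / 2
  calc ∑ u ∈ S, ∑ w ∈ Sᶜ, A.edgeWronskian ζ η u w
      = ∑ u ∈ S, ∑ w, A.edgeWronskian ζ η u w
          - ∑ u ∈ S, ∑ w ∈ S, A.edgeWronskian ζ η u w := by
        simp only [← sum_add_sum_compl S, sum_add_distrib]
        ring
    _ = 0 := by simp [sum_edgeWronskian_eq_zero hA hη hζ, inside]

lemma edgeWronskian_eq_zero_of_isBridge {G : SimpleGraph n} (hA : A.IsHermitian)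
    (hsupp : ∀ u w, u ≠ w → ¬ G.Adj u w → A u w = 0)
    (hη : A *ᵥ η = (lam : 𝕜) • η) (hζ : A *ᵥ ζ = (lam : 𝕜) • ζ) {v w : n}
    (hvw : G.IsBridge s(v, w)) : A.edgeWronskian ζ η v w = 0 := by
  classical
  set S := univ.filter fun u => (G.deleteEdges {s(v, w)}).Reachable v u
  have hvS : v ∈ S := by simp [S]
  have hwS : w ∈ Sᶜ := by simpa [S] using isBridge_iff.mp hvw
  have crossing : ∀ u ∈ S, ∀ x ∈ Sᶜ, G.Adj u x → u = v ∧ x = w := by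
    intro u hu x hx hadj
    simp only [S, mem_compl, mem_filter, mem_univ, true_and] at hu hx
    by_cases he : s(u, x) = s(v, w)
    · rcases Sym2.eq_iff.mp he with h | ⟨rfl, rfl⟩
      · exact h
      · exact absurd hu (isBridge_iff.mp hvw)
    · exact absurd (hu.trans (deleteEdges_adj.mpr ⟨hadj, he⟩).reachable) hx
  have hzero : ∀ u ∈ S, ∀ x ∈ Sᶜ, ¬ (u = v ∧ x = w) →
      A.edgeWronskian ζ η u x = 0 := by
    intro u hu x hx h
    have hux : u ≠ x := by rintro rfl; exact (mem_compl.mp hx) hu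
    have hadj : ¬ G.Adj u x := fun hadj => h (crossing u hu x hx hadj)
    simp [edgeWronskian, hsupp u x hux hadj, hsupp x u hux.symm (fun h' => hadj h'.symm)]
  have := sum_sum_compl_edgeWronskian_eq_zero hA hη hζ S
  rwa [sum_eq_single_of_mem v hvS fun u hu huv =>
      sum_eq_zero fun x hx => hzero u hu x hx fun h => huv h.1,
    sum_eq_single_of_mem w hwS fun x hx hxw => hzero v hvS x hx fun h => hxw h.2] at this

lemma mul_eq_mul_of_isBridge {G : SimpleGraph n} (hA : A.IsHermitian)
    (hsupp : ∀ u w, u ≠ w → ¬ G.Adj u w → A u w = 0)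
    (hη : A *ᵥ η = (lam : 𝕜) • η) (hζ : A *ᵥ ζ = (lam : 𝕜) • ζ) {v w : n}
    (hvw : G.IsBridge s(v, w)) (hwv : A w v ≠ 0) (hηv : η v ≠ 0) :
    ζ v * η w = ζ w * η v := by
  have hζη := edgeWronskian_eq_zero_of_isBridge hA hsupp hη hζ hvw
  have hηη := edgeWronskian_eq_zero_of_isBridge hA hsupp hη hη hvw
  simp only [edgeWronskian] at hζη hηη
  apply star_injective
  apply mul_right_cancel₀ (mul_ne_zero hwv hηv)
  simp only [star_mul']
  linear_combination star (η v) * hζη - star (ζ v) * hηη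

end Matrix

theorem stmt_17_general {V : Type*} [Fintype V] (G : SimpleGraph V)
    (hT : G.IsTree) (A : Matrix V V ℂ) (hHerm : A.IsHermitian)
    (hsupp : ∀ u v : V, u ≠ v → ¬ G.Adj u v → A u v = 0)
    (hnz : ∀ u v : V, G.Adj u v → A u v ≠ 0)
    (r : V) (p : V → V)
    (hp : ∀ v : V, v ≠ r → G.Adj v (p v) ∧ G.dist r (p v) + 1 = G.dist r v)
    (lam : ℝ) (η : V → ℂ) (hη : A.mulVec η = (lam : ℂ) • η)
    (hηnz : ∀ v : V, η v ≠ 0)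
    (ζ : V → ℂ) (hζ : A.mulVec ζ = (lam : ℂ) • ζ) :
    (∀ v : V, v ≠ r → ζ v * η (p v) = ζ (p v) * η v) ∧
    (∀ v : V, ζ v = (ζ r / η r) * η v) := by
  have hedge : ∀ v w, G.Adj v w → ζ v * η w = ζ w * η v := fun v w hvw =>
    Matrix.mul_eq_mul_of_isBridge hHerm hsupp hη hζ
      (isAcyclic_iff_forall_adj_isBridge.mp hT.isAcyclic hvw) (hnz w v hvw.symm) (hηnz v)
  refine ⟨fun v hvr => hedge v (p v) (hp v hvr).1, fun v => ?_⟩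
  have hratio : ζ r / η r = ζ v / η v :=
    (hT.connected.preconnected r v).apply_eq_of_forall_adj fun u w huw => by
      rw [div_eq_div_iff (hηnz u) (hηnz w)]
      exact hedge u w huw
  rw [hratio, div_mul_cancel₀ _ (hηnz v)]

/-- On a finite rooted tree with Hermitian (nonzero on edges) weights, if `η`
is a nowhere-zero `lam`-eigenvector of the Jacobi matrix `A` and `ζ ∈ Ker(lam - A)`, then
`ζ v * η (p v) = ζ (p v) * η v` for every non-root vertex `v` (the ratio
`|a_{p(v)←v}|²/|a_{v←p(v)}|² = 1` being absorbed), and hence `ζ = (ζ r / η r) • η`. -/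
theorem stmt_17 {V : Type*} [Fintype V] [DecidableEq V] (G : SimpleGraph V)
    (hT : G.IsTree) (A : Matrix V V ℂ) (hHerm : A.IsHermitian)
    (hsupp : ∀ u v : V, u ≠ v → ¬ G.Adj u v → A u v = 0)
    (hnz : ∀ u v : V, G.Adj u v → A u v ≠ 0)
    (r : V) (p : V → V)
    (hp : ∀ v : V, v ≠ r → G.Adj v (p v) ∧ G.dist r (p v) + 1 = G.dist r v)
    (lam : ℝ) (η : V → ℂ) (hη : A.mulVec η = (lam : ℂ) • η)
    (hηnz : ∀ v : V, η v ≠ 0)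
    (ζ : V → ℂ) (hζ : A.mulVec ζ = (lam : ℂ) • ζ) :
    (∀ v : V, v ≠ r → ζ v * η (p v) = ζ (p v) * η v) ∧
    (∀ v : V, ζ v = (ζ r / η r) * η v) :=
  stmt_17_general G hT A hHerm hsupp hnz r p hp lam η hη hηnz ζ hζ
end
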